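/- Define the sequence (α_n) by α_1 = 1, α_2 = 2, α_3 = 6, α_4 = 26, and for n ≥ 5, α_n = ρ_{⌈n/2⌉, ⌊n/2⌋} · α_{⌈n/2⌉}, where ρ_{m,p} is the number of gapless rectangular shapes with p rows and m columns. Then the number of gapless triangular shapes of size n is at least α_n. -/

import Mathlib

/-- A gapless rectangular shape with `p` rows and `m` columns. -/
def IsGaplessRect (p m : ℕ) (r : ℕ → ℕ → ℕ) : Prop :=
  (∀ i j, 1 ≤ i → i ≤ p → 1 ≤ j → j ≤ m → r i j = 0 ∨ r i j = 1) ∧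
  (∀ i j, i < 1 ∨ p < i ∨ j < 1 ∨ m < j → r i j = 0) ∧
  (∀ j, 1 ≤ j → j < m → ∀ i, 1 ≤ i → i ≤ p →
     ∑ k ∈ Finset.Icc i p, r k j ≤ ∑ k ∈ Finset.Icc i p, r k (j + 1))

/-- `rho m p` is the number of gapless rectangular shapes with `p` rows and `m` columns. -/
noncomputable def rho (m p : ℕ) : ℕ := Nat.card {r : ℕ → ℕ → ℕ // IsGaplessRect p m r}

/-- A gapless triangular shape of size `n`. -/
def IsGaplessTriShape (n : ℕ) (s : ℕ → ℕ → ℕ) : Prop :=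
  (∀ i j, 1 ≤ j → j ≤ i → i ≤ n → s i j = 0 ∨ s i j = 1) ∧
  (∀ i j, j < 1 ∨ i < j ∨ n < i → s i j = 0) ∧
  (∀ j, 1 ≤ j → j + 1 ≤ n → ∀ i, 1 ≤ i → i ≤ j →
     ∑ k ∈ Finset.Icc 1 i, s (n + 1 - k) (n - j) ≤
       ∑ k ∈ Finset.Icc 1 i, s (n + 1 - k) (n + 1 - j))

/-- The sequence `α`: `α 1 = 1`, `α 2 = 2`, `α 3 = 6`, `α 4 = 26`, and for `n ≥ 5`,
`α n = ρ_{⌈n/2⌉, ⌊n/2⌋} · α_{⌈n/2⌉}`. -/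
noncomputable def alphaSeq : ℕ → ℕ
  | 0 => 0
  | 1 => 1
  | 2 => 2
  | 3 => 6
  | 4 => 26
  | (n + 5) => rho ((n + 5 + 1) / 2) ((n + 5) / 2) * alphaSeq ((n + 5 + 1) / 2)
  decreasing_by omega

/-!
Put a gapless triangle of size `m` on top of a gapless `p × m` rectangle and fill the triangle of
size `p` to the right of column `m` with ones. The result is a gapless triangle of size `m + p`:
the all-ones columns beyond `m` dominate anything, and for columns up to `m` the bottom-up partial
sums split into a rectangle part and a triangle part, each controlled by its own gapless
condition. The gluing is injective, so `ρ_{m,p} · T_m ≤ T_{m+p}`, which for `m = ⌈n/2⌉`,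
`p = ⌊n/2⌋` is the recursion of `α`. For `n ≤ 4`, triangles whose every row has the form
`0…01…1` satisfy the column condition entrywise; there are `(n + 1)! ≥ α_n` of them.
-/

open Finset
open scoped Nat

lemma Finset.sum_Icc_consecutive {M : Type*} [AddCommMonoid M] (f : ℕ → M) {a b c : ℕ}
    (hab : a ≤ b + 1) (hbc : b ≤ c) :
    ∑ k ∈ Icc a b, f k + ∑ k ∈ Icc (b + 1) c, f k = ∑ k ∈ Icc a c, f k := by
  simp only [← Ico_add_one_right_eq_Icc]
  exact sum_Ico_consecutive f hab (by omega)

lemma Finset.sum_Icc_add_left {M : Type*} [AddCommMonoid M] (f : ℕ → M) (a b c : ℕ) :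
    ∑ k ∈ Icc (c + a) (c + b), f k = ∑ k ∈ Icc a b, f (c + k) := by
  rw [← map_add_left_Icc, sum_map]
  rfl

lemma Finset.sum_Icc_one_reflect {M : Type*} [AddCommMonoid M] (f : ℕ → M) {i n : ℕ}
    (h : i ≤ n) : ∑ k ∈ Icc 1 i, f (n + 1 - k) = ∑ k ∈ Icc (n + 1 - i) n, f k := by
  apply sum_nbij' (fun k => n + 1 - k) (fun k => n + 1 - k) <;>
    intro k hk <;> simp only [mem_Icc] at * <;> omega

section TriShape

variable {n : ℕ} {s : ℕ → ℕ → ℕ}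

lemma IsGaplessTriShape.le_one (h : IsGaplessTriShape n s) (i j : ℕ) : s i j ≤ 1 := by
  by_cases hc : 1 ≤ j ∧ j ≤ i ∧ i ≤ n
  · rcases h.1 i j hc.1 hc.2.1 hc.2.2 with h0 | h0 <;> omega
  · rw [h.2.1 i j (by omega)]
    omega

/-- The column condition in plain row and column indices: column `c` against column `c + 1`
on the rows `a, …, n`. -/
lemma isGaplessTriShape_iff_sum_Icc_le :
    IsGaplessTriShape n s ↔
      (∀ i j, 1 ≤ j → j ≤ i → i ≤ n → s i j = 0 ∨ s i j = 1) ∧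
      (∀ i j, j < 1 ∨ i < j ∨ n < i → s i j = 0) ∧
      (∀ c a, 1 ≤ c → c < a → a ≤ n →
        ∑ k ∈ Icc a n, s k c ≤ ∑ k ∈ Icc a n, s k (c + 1)) := by
  refine and_congr_right' (and_congr_right'
    ⟨fun h c a hc hca han => ?_, fun h j hj hjn i hi hij => ?_⟩)
  · have key := h (n - c) (by omega) (by omega) (n + 1 - a) (by omega) (by omega)
    rwa [show n - (n - c) = c by omega, show n + 1 - (n - c) = c + 1 by omega,
      sum_Icc_one_reflect (fun k => s k c) (by omega),
      sum_Icc_one_reflect (fun k => s k (c + 1)) (by omega),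
      show n + 1 - (n + 1 - a) = a by omega] at key
  · rw [show n + 1 - j = n - j + 1 by omega, sum_Icc_one_reflect (fun k => s k (n - j)) (by omega),
      sum_Icc_one_reflect (fun k => s k (n - j + 1)) (by omega)]
    exact h (n - j) (n + 1 - i) (by omega) (by omega) (by omega)

instance (n : ℕ) : Finite {s : ℕ → ℕ → ℕ // IsGaplessTriShape n s} := by
  refine Finite.of_injective (β := Fin (n + 1) → Fin (n + 1) → Fin 2)
    (fun s i j => ⟨s.1 i j, Nat.lt_succ_of_le (s.2.le_one i j)⟩) fun s t h => ?_
  ext i j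
  by_cases hc : i ≤ n ∧ j ≤ n
  · simpa using congrFun (congrFun h ⟨i, by omega⟩) ⟨j, by omega⟩
  · rw [s.2.2.1 i j (by omega), t.2.2.1 i j (by omega)]

end TriShape

lemma IsGaplessRect.le_one {p m : ℕ} {r : ℕ → ℕ → ℕ} (h : IsGaplessRect p m r) (i j : ℕ) :
    r i j ≤ 1 := by
  by_cases hc : 1 ≤ i ∧ i ≤ p ∧ 1 ≤ j ∧ j ≤ m
  · rcases h.1 i j hc.1 hc.2.1 hc.2.2.1 hc.2.2.2 with h0 | h0 <;> omega
  · rw [h.2.1 i j (by omega)]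
    omega

lemma IsGaplessRect.sum_Icc_le {p m : ℕ} {r : ℕ → ℕ → ℕ} (h : IsGaplessRect p m r) {j b : ℕ}
    (hj : 1 ≤ j) (hjm : j < m) (hb : 1 ≤ b) :
    ∑ k ∈ Icc b p, r k j ≤ ∑ k ∈ Icc b p, r k (j + 1) := by
  by_cases hbp : b ≤ p
  · exact h.2.2 j hj hjm b hb hbp
  · simp [Icc_eq_empty_of_lt (not_le.1 hbp)]

def glue (m p : ℕ) (t r : ℕ → ℕ → ℕ) (i j : ℕ) : ℕ :=
  if 1 ≤ j ∧ j ≤ i ∧ i ≤ m + p then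
    if m < j then 1 else if m < i then r (i - m) j else t i j
  else 0

section Glue

variable {m p : ℕ} {t r : ℕ → ℕ → ℕ}

lemma glue_of_le {i j : ℕ} (hj : 1 ≤ j) (hji : j ≤ i) (him : i ≤ m) :
    glue m p t r i j = t i j := by
  rw [glue, if_pos ⟨hj, hji, by omega⟩, if_neg (by omega), if_neg (by omega)]

lemma glue_add {a j : ℕ} (hj : 1 ≤ j) (hjm : j ≤ m) (ha : 1 ≤ a) (hap : a ≤ p) :
    glue m p t r (m + a) j = r a j := by
  rw [glue, if_pos ⟨hj, by omega, by omega⟩, if_neg (by omega), if_pos (by omega),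
    Nat.add_sub_cancel_left]

lemma glue_of_lt {i j : ℕ} (hmj : m < j) (hji : j ≤ i) (hi : i ≤ m + p) :
    glue m p t r i j = 1 := by
  rw [glue, if_pos ⟨by omega, hji, hi⟩, if_pos hmj]

lemma glue_le_one (ht : IsGaplessTriShape m t) (hr : IsGaplessRect p m r) (i j : ℕ) :
    glue m p t r i j ≤ 1 := by
  unfold glue
  split_ifs
  exacts [le_rfl, hr.le_one _ _, ht.le_one _ _, zero_le_one]

lemma isGaplessTriShape_glue (ht : IsGaplessTriShape m t) (hr : IsGaplessRect p m r) :
    IsGaplessTriShape (m + p) (glue m p t r) := by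
  refine isGaplessTriShape_iff_sum_Icc_le.2 ⟨fun i j hj hji hi => ?_, fun i j h => ?_,
    fun c a hc hca ha => ?_⟩
  · rw [glue, if_pos ⟨hj, hji, hi⟩]
    split_ifs
    exacts [Or.inr rfl, hr.1 _ _ (by omega) (by omega) hj (by omega), ht.1 i j hj hji (by omega)]
  · rw [glue, if_neg (by omega)]
  rcases lt_or_ge c m with hcm | hmc
  · have rect : ∀ b, 1 ≤ b → ∑ k ∈ Icc (m + b) (m + p), glue m p t r k c ≤
        ∑ k ∈ Icc (m + b) (m + p), glue m p t r k (c + 1) := fun b hb => by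
      rw [sum_Icc_add_left, sum_Icc_add_left,
        sum_congr rfl fun k hk => glue_add hc hcm.le (hb.trans (mem_Icc.1 hk).1) (mem_Icc.1 hk).2,
        sum_congr rfl fun k hk =>
          glue_add (by omega) hcm (hb.trans (mem_Icc.1 hk).1) (mem_Icc.1 hk).2]
      exact hr.sum_Icc_le hc hcm hb
    rcases le_or_gt a m with ham | hma
    · have tri := (isGaplessTriShape_iff_sum_Icc_le.1 ht).2.2 c a hc hca ham
      rw [← sum_Icc_consecutive _ (by omega : a ≤ m + 1) (by omega : m ≤ m + p),
        ← sum_Icc_consecutive _ (by omega : a ≤ m + 1) (by omega : m ≤ m + p),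
        sum_congr rfl fun k hk => glue_of_le hc (by grind) (mem_Icc.1 hk).2,
        sum_congr rfl fun k hk => glue_of_le (by omega) (by grind) (mem_Icc.1 hk).2]
      exact add_le_add tri (rect 1 le_rfl)
    · obtain ⟨b, rfl⟩ : ∃ b, a = m + b := ⟨a - m, by omega⟩
      exact rect b (by omega)
  · -- every row from `a` down meets column `c + 1 > m` in a one
    refine sum_le_sum fun k hk => (glue_le_one ht hr k c).trans (glue_of_lt ?_ ?_ ?_).ge <;>
      grind

lemma glue_injective {t₁ t₂ r₁ r₂ : ℕ → ℕ → ℕ} (ht₁ : IsGaplessTriShape m t₁)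
    (ht₂ : IsGaplessTriShape m t₂) (hr₁ : IsGaplessRect p m r₁) (hr₂ : IsGaplessRect p m r₂)
    (h : glue m p t₁ r₁ = glue m p t₂ r₂) : t₁ = t₂ ∧ r₁ = r₂ := by
  constructor
  · ext i j
    by_cases hc : 1 ≤ j ∧ j ≤ i ∧ i ≤ m
    · rw [← glue_of_le (p := p) (t := t₁) (r := r₁) hc.1 hc.2.1 hc.2.2,
        ← glue_of_le (p := p) (t := t₂) (r := r₂) hc.1 hc.2.1 hc.2.2, h]
    · rw [ht₁.2.1 i j (by omega), ht₂.2.1 i j (by omega)]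
  · ext a j
    by_cases hc : 1 ≤ a ∧ a ≤ p ∧ 1 ≤ j ∧ j ≤ m
    · rw [← glue_add (t := t₁) (r := r₁) hc.2.2.1 hc.2.2.2 hc.1 hc.2.1,
        ← glue_add (t := t₂) (r := r₂) hc.2.2.1 hc.2.2.2 hc.1 hc.2.1, h]
    · rw [hr₁.2.1 a j (by omega), hr₂.2.1 a j (by omega)]

end Glue

theorem rho_mul_card_le_card (m p : ℕ) :
    rho m p * Nat.card {t : ℕ → ℕ → ℕ // IsGaplessTriShape m t} ≤
      Nat.card {s : ℕ → ℕ → ℕ // IsGaplessTriShape (m + p) s} := by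
  rw [rho, ← Nat.card_prod]
  refine Nat.card_le_card_of_injective
    (fun x => ⟨glue m p x.2.1 x.1.1, isGaplessTriShape_glue x.2.2 x.1.2⟩) ?_
  rintro ⟨⟨r₁, hr₁⟩, ⟨t₁, ht₁⟩⟩ ⟨⟨r₂, hr₂⟩, ⟨t₂, ht₂⟩⟩ h
  obtain ⟨rfl, rfl⟩ := glue_injective ht₁ ht₂ hr₁ hr₂ (congrArg Subtype.val h)
  rfl

def ladder (n : ℕ) (x : (i : Fin n) → Fin (i + 2)) (i j : ℕ) : ℕ :=
  if h : 1 ≤ i ∧ i ≤ n then (if (x ⟨i - 1, by omega⟩ : ℕ) < j ∧ j ≤ i then 1 else 0) else 0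

lemma isGaplessTriShape_ladder (n : ℕ) (x : (i : Fin n) → Fin (i + 2)) :
    IsGaplessTriShape n (ladder n x) := by
  refine isGaplessTriShape_iff_sum_Icc_le.2 ⟨fun i j _ _ _ => ?_, fun i j h => ?_,
    fun c a hc hca ha => sum_le_sum fun k hk => ?_⟩
  all_goals
    unfold ladder
    split_ifs <;> grind

lemma ladder_injective (n : ℕ) : Function.Injective (ladder n) := by
  have key : ∀ x y, ladder n x = ladder n y → ∀ i, (x i : ℕ) ≤ y i := fun x y h i => by
    by_contra! hlt
    have := congrFun (congrFun h (i + 1)) (x i)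
    simp only [ladder] at this
    grind
  exact fun x y h => funext fun i => Fin.ext ((key x y h i).antisymm (key y x h.symm i))

theorem factorial_le_card (n : ℕ) :
    (n + 1)! ≤ Nat.card {s : ℕ → ℕ → ℕ // IsGaplessTriShape n s} := by
  have hcard : Nat.card ((i : Fin n) → Fin (i + 2)) = (n + 1)! := by
    rw [Nat.card_pi]
    simp only [Nat.card_eq_fintype_card, Fintype.card_fin]
    rw [Fin.prod_univ_eq_prod_range (· + 2), ← prod_range_add_one_eq_factorial, prod_range_succ']
    simp
  rw [← hcard]
  exact Nat.card_le_card_of_injective (fun x => ⟨ladder n x, isGaplessTriShape_ladder n x⟩)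
    fun x y h => ladder_injective n (congrArg Subtype.val h)

theorem card_gapless_tri_ge_alpha_general (n : ℕ) :
    alphaSeq n ≤ Nat.card {s : ℕ → ℕ → ℕ // IsGaplessTriShape n s} := by
  induction n using Nat.strong_induction_on with
  | _ n ih =>
  rcases lt_or_ge n 5 with hn | hn
  · refine le_trans ?_ (factorial_le_card n)
    interval_cases n <;> simp [alphaSeq, Nat.factorial]
  obtain ⟨k, rfl⟩ : ∃ k, n = k + 5 := ⟨n - 5, by omega⟩
  calc alphaSeq (k + 5) = rho ((k + 5 + 1) / 2) ((k + 5) / 2) * alphaSeq ((k + 5 + 1) / 2) := by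
        rw [alphaSeq]
    _ ≤ rho ((k + 5 + 1) / 2) ((k + 5) / 2) *
        Nat.card {s : ℕ → ℕ → ℕ // IsGaplessTriShape ((k + 5 + 1) / 2) s} :=
      Nat.mul_le_mul_left _ (ih _ (by omega))
    _ ≤ Nat.card {s : ℕ → ℕ → ℕ // IsGaplessTriShape ((k + 5 + 1) / 2 + (k + 5) / 2) s} :=
      rho_mul_card_le_card _ _
    _ = Nat.card {s : ℕ → ℕ → ℕ // IsGaplessTriShape (k + 5) s} := by
      rw [show (k + 5 + 1) / 2 + (k + 5) / 2 = k + 5 by omega]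

/-- The number of gapless triangular shapes of size `n` is at least `α n`. -/
theorem card_gapless_tri_ge_alpha (n : ℕ) (hn : 1 ≤ n) :
    alphaSeq n ≤ Nat.card {s : ℕ → ℕ → ℕ // IsGaplessTriShape n s} :=
  card_gapless_tri_ge_alpha_general n
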